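/- Let M be a nonnegative irreducible real n×n matrix admitting an equitable partition Π of {1,…,n}, and let X be the Perron vector of M (a positive eigenvector associated with the spectral radius of M). Then the entries of X are constant on each cell of the partition Π. -/

import Mathlib

open Matrix

/-- The cell (clique index) of a vertex of the join-of-cliques graph:
`none` for vertices of the central `K_s`, `some i` for vertices of `K_{parts i}`. -/
def cellOf {s t : ℕ} {parts : Fin t → ℕ} :
    (Fin s ⊕ (Σ i : Fin t, Fin (parts i))) → Option (Fin t)
  | Sum.inl _ => none
  | Sum.inr ⟨i, _⟩ => some i

/-- The graph `K_s ∨ (K_{parts 0} ∪ K_{parts 1} ∪ ⋯ ∪ K_{parts (t-1)})`. -/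
def cliqueJoin (s : ℕ) {t : ℕ} (parts : Fin t → ℕ) :
    SimpleGraph (Fin s ⊕ (Σ i : Fin t, Fin (parts i))) where
  Adj x y := x ≠ y ∧ (cellOf x = none ∨ cellOf y = none ∨ cellOf x = cellOf y)
  symm := by constructor; rintro x y ⟨h1, h2⟩; exact ⟨h1.symm, by tauto⟩
  loopless := by constructor; rintro x ⟨h1, -⟩; exact h1 rfl

/-- The `A_α`-matrix `A_α(G) = α D(G) + (1-α) A(G)`. -/
noncomputable def Aalpha {V : Type*} [Fintype V] (α : ℝ) (G : SimpleGraph V) :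
    Matrix V V ℝ :=
  letI := Classical.decEq V
  letI := Classical.decRel G.Adj
  α • Matrix.diagonal (fun v => (G.degree v : ℝ)) + (1 - α) • (G.adjMatrix ℝ)

/-- The largest real eigenvalue of a real matrix (for a real symmetric matrix,
this is its largest eigenvalue). -/
noncomputable def specRad {V : Type*} [Fintype V] (M : Matrix V V ℝ) : ℝ :=
  letI := Classical.decEq V
  sSup (spectrum ℝ M)

/-- The `A_α`-spectral radius of a graph. -/
noncomputable def rhoAlpha {V : Type*} [Fintype V] (α : ℝ) (G : SimpleGraph V) : ℝ :=
  specRad (Aalpha α G)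

/-- `G` has an even factor: a spanning subgraph in which every vertex has positive
even degree. -/
def HasEvenFactor {V : Type*} [Fintype V] (G : SimpleGraph V) : Prop :=
  ∃ H : SimpleGraph V, H ≤ G ∧
    ∀ v : V, 0 < (H.neighborSet v).ncard ∧ Even ((H.neighborSet v).ncard)

/-- The spectral radius of a real matrix: the maximum modulus of its complex
eigenvalues. -/
noncomputable def cSpecRad {m : Type*} [Fintype m] (M : Matrix m m ℝ) : ℝ :=
  letI := Classical.decEq m
  sSup ((norm : ℂ → ℝ) '' spectrum ℂ (M.map (fun r => (r : ℂ))))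

/-- A matrix is irreducible. -/
def MatIrreducible {m : Type*} [Fintype m] [DecidableEq m] (M : Matrix m m ℝ) : Prop :=
  ∀ i j, ∃ k : ℕ, 0 < (M ^ k) i j

/-!
Let `W` be the cellwise minimum of `X`. Being constant on cells, `W` is sent by the equitable
matrix `M` to a vector that is again constant on cells; evaluating at a minimiser of each cell
gives `M W ≤ ρ W`. For a nonnegative irreducible `M` with a positive `ρ`-eigenvector `X`, every
positive `ρ`-subinvariant vector `W` is a multiple of `X`: with `c = max X / W`, the vector
`c W - X` is nonnegative, subinvariant and vanishes somewhere, so by irreducibility it vanishes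
everywhere. Hence `X = c W`, and `c = 1` because `X` and `W` agree at a cell's minimiser.
-/

section CellMinimum

variable {ι κ : Type*}

noncomputable def cellMin (π : ι → κ) (X : ι → ℝ) (a : κ) : ℝ :=
  ⨅ z : {z // π z = a}, X z

variable [Finite ι]

theorem cellMin_le (π : ι → κ) (X : ι → ℝ) (i : ι) : cellMin π X (π i) ≤ X i :=
  ciInf_le (Set.finite_range _).bddBelow (⟨i, rfl⟩ : {z // π z = π i})

theorem exists_eq_cellMin (π : ι → κ) (X : ι → ℝ) (i : ι) :
    ∃ j, π j = π i ∧ X j = cellMin π X (π i) := by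
  have : Nonempty {z // π z = π i} := ⟨⟨i, rfl⟩⟩
  obtain ⟨⟨j, hj⟩, h⟩ := exists_eq_ciInf_of_finite (f := fun z : {z // π z = π i} => X z)
  exact ⟨j, hj, h⟩

end CellMinimum

namespace Matrix

open Finset

section Equitable

variable {ι κ R : Type*} [Fintype ι] [Fintype κ] [DecidableEq κ] [Semiring R]

def IsEquitable (M : Matrix ι ι R) (π : ι → κ) : Prop :=
  ∀ (x y : ι) (j : κ), π x = π y →
    ∑ z ∈ univ.filter (fun z => π z = j), M x z =
    ∑ z ∈ univ.filter (fun z => π z = j), M y z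

theorem mulVec_comp_apply (M : Matrix ι ι R) (π : ι → κ) (g : κ → R) (x : ι) :
    (M *ᵥ (g ∘ π)) x = ∑ a, (∑ z ∈ univ.filter (fun z => π z = a), M x z) * g a := by
  simp only [mulVec, dotProduct, Function.comp_apply, sum_mul]
  rw [← sum_fiberwise univ π]
  refine sum_congr rfl fun a _ => sum_congr rfl fun z hz => ?_
  rw [(mem_filter.1 hz).2]

theorem IsEquitable.mulVec_comp_apply_eq {M : Matrix ι ι R} {π : ι → κ}
    (hM : M.IsEquitable π) (g : κ → R) {x y : ι} (hxy : π x = π y) :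
    (M *ᵥ (g ∘ π)) x = (M *ᵥ (g ∘ π)) y := by
  simp only [mulVec_comp_apply, hM x y _ hxy]

end Equitable

section Subinvariant

variable {ι : Type*} [Fintype ι] {M : Matrix ι ι ℝ} {ρ : ℝ} {U : ι → ℝ}

theorem apply_eq_zero_of_mulVec_le_of_pos (hM : ∀ i j, 0 ≤ M i j) (hU : 0 ≤ U)
    (hMU : M *ᵥ U ≤ ρ • U) {i j : ι} (hi : U i = 0) (hij : 0 < M i j) : U j = 0 := by
  have hterms : ∀ l ∈ univ, 0 ≤ M i l * U l := fun l _ => mul_nonneg (hM i l) (hU l)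
  have hsum : ∑ l, M i l * U l = 0 := by
    refine le_antisymm ?_ (sum_nonneg hterms)
    simpa [mulVec, dotProduct, hi] using hMU i
  have hj := (sum_eq_zero_iff_of_nonneg hterms).1 hsum j (mem_univ j)
  exact (mul_eq_zero.1 hj).resolve_left hij.ne'

theorem apply_eq_zero_of_mulVec_le_of_pow_pos [DecidableEq ι] (hM : ∀ i j, 0 ≤ M i j)
    (hU : 0 ≤ U) (hMU : M *ᵥ U ≤ ρ • U) (k : ℕ) {i j : ι} (hi : U i = 0)
    (hij : 0 < (M ^ k) i j) : U j = 0 := by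
  induction k generalizing i with
  | zero =>
    obtain rfl : i = j := by by_contra h; simp [h] at hij
    exact hi
  | succ k ih =>
    rw [pow_succ', mul_apply] at hij
    obtain ⟨l, -, hl⟩ := (sum_pos_iff_of_nonneg fun l _ =>
      mul_nonneg (hM i l) (pow_apply_nonneg hM k l j)).1 hij
    have hil : 0 < M i l := pos_of_mul_pos_left hl (pow_apply_nonneg hM k l j)
    exact ih (apply_eq_zero_of_mulVec_le_of_pos hM hU hMU hi hil)
      (pos_of_mul_pos_right hl (hM i l))

theorem eq_zero_of_mulVec_le_of_irreducible [DecidableEq ι] (hM : ∀ i j, 0 ≤ M i j)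
    (hirr : MatIrreducible M) (hU : 0 ≤ U) (hMU : M *ᵥ U ≤ ρ • U) {i : ι} (hi : U i = 0) :
    U = 0 := by
  ext j
  obtain ⟨k, hk⟩ := hirr i j
  exact apply_eq_zero_of_mulVec_le_of_pow_pos hM hU hMU k hi hk

theorem exists_eq_smul_of_mulVec_le [Nonempty ι] [DecidableEq ι] (hM : ∀ i j, 0 ≤ M i j)
    (hirr : MatIrreducible M) {X W : ι → ℝ} (hX : M *ᵥ X = ρ • X) (hXpos : ∀ i, 0 < X i)
    (hWpos : ∀ i, 0 < W i) (hMW : M *ᵥ W ≤ ρ • W) : ∃ c : ℝ, X = c • W := by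
  obtain ⟨i₀, hi₀⟩ := Finite.exists_max fun i => X i / W i
  set c := X i₀ / W i₀
  refine ⟨c, (sub_eq_zero.1 ?_).symm⟩
  have hXle : X ≤ c • W := fun i => (div_le_iff₀ (hWpos i)).1 (hi₀ i)
  have hc : 0 ≤ c := (div_pos (hXpos i₀) (hWpos i₀)).le
  refine eq_zero_of_mulVec_le_of_irreducible (ρ := ρ) (i := i₀) hM hirr
    (sub_nonneg.2 hXle) ?_ ?_
  · calc M *ᵥ (c • W - X) = c • M *ᵥ W - M *ᵥ X := by rw [mulVec_sub, mulVec_smul]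
      _ ≤ c • ρ • W - ρ • X := by rw [hX]; gcongr
      _ = ρ • (c • W - X) := by rw [smul_sub, smul_comm]
  · simp [c, div_mul_cancel₀ _ (hWpos i₀).ne']

theorem mulVec_cellMin_le {κ : Type*} [Fintype κ] [DecidableEq κ] {π : ι → κ}
    (hequit : M.IsEquitable π) (hM : ∀ i j, 0 ≤ M i j) {X : ι → ℝ}
    (hX : M *ᵥ X = ρ • X) :
    M *ᵥ (cellMin π X ∘ π) ≤ ρ • (cellMin π X ∘ π) := by
  intro i
  obtain ⟨j, hji, hj⟩ := exists_eq_cellMin π X i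
  have hle : M *ᵥ (cellMin π X ∘ π) ≤ M *ᵥ X := fun l =>
    sum_le_sum fun z _ => mul_le_mul_of_nonneg_left (cellMin_le π X z) (hM l z)
  calc (M *ᵥ (cellMin π X ∘ π)) i = (M *ᵥ (cellMin π X ∘ π)) j :=
        hequit.mulVec_comp_apply_eq _ hji.symm
    _ ≤ (M *ᵥ X) j := hle j
    _ = ρ * cellMin π X (π i) := by rw [hX, Pi.smul_apply, hj, smul_eq_mul]

end Subinvariant

end Matrix

theorem perronVector_constant_on_cells_general
    (n k : ℕ) (M : Matrix (Fin n) (Fin n) ℝ)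
    (hM : ∀ i j, 0 ≤ M i j) (hirr : MatIrreducible M)
    (π : Fin n → Fin k)
    (hequit : ∀ (x y : Fin n) (j : Fin k), π x = π y →
      ∑ z ∈ Finset.univ.filter (fun z => π z = j), M x z =
      ∑ z ∈ Finset.univ.filter (fun z => π z = j), M y z)
    (X : Fin n → ℝ) (hX : ∀ i, 0 < X i)
    (hEig : M.mulVec X = cSpecRad M • X) :
    ∀ x y : Fin n, π x = π y → X x = X y := by
  intro x y hxy
  have : Nonempty (Fin n) := ⟨x⟩
  have hWpos : ∀ i, 0 < cellMin π X (π i) := fun i => by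
    obtain ⟨j, -, hj⟩ := exists_eq_cellMin π X i
    exact hj ▸ hX j
  obtain ⟨c, hc⟩ :=
    exists_eq_smul_of_mulVec_le hM hirr hEig hX hWpos (mulVec_cellMin_le hequit hM hEig)
  obtain ⟨j, hjx, hj⟩ := exists_eq_cellMin π X x
  have hc1 : c = 1 := by
    have hcj : X j = c * X j := by simpa [hjx, ← hj] using congrFun hc j
    exact (mul_eq_right₀ (hX j).ne').1 hcj.symm
  rw [hc, hc1, one_smul]
  exact congrArg (cellMin π X) hxy

theorem perronVector_constant_on_cells
    (n k : ℕ) (M : Matrix (Fin n) (Fin n) ℝ)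
    (hM : ∀ i j, 0 ≤ M i j) (hirr : MatIrreducible M)
    (π : Fin n → Fin k) (hπ : Function.Surjective π)
    (hequit : ∀ (x y : Fin n) (j : Fin k), π x = π y →
      ∑ z ∈ Finset.univ.filter (fun z => π z = j), M x z =
      ∑ z ∈ Finset.univ.filter (fun z => π z = j), M y z)
    (X : Fin n → ℝ) (hX : ∀ i, 0 < X i)
    (hEig : M.mulVec X = cSpecRad M • X) :
    ∀ x y : Fin n, π x = π y → X x = X y :=
  perronVector_constant_on_cells_general n k M hM hirr π hequit X hX hEig
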